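/- arXiv:math/0702386 — 2 statements merged into one kernel-verified Lean document; each statement's English description precedes it below -/
import Mathlib

section
/- Fix $z\in\mathbb C$ and $\alpha=u+iv$ with $v>0$. Suppose $S=S(\alpha,z)$ satisfies the equation $S=-\frac{\alpha+S}{(\alpha+S)^2-|z|^2}$ and $\mathrm{Im}\,S>0$. Then $1-|S|^2-\frac{|z|^2|S|^2}{|\alpha+S|^2}\ \ge\ \frac{v}{v+1}$. In particular $|S(\alpha,z)|\le 1$ and $1-\frac{|\alpha+S|^2+|z|^2}{|(\alpha+S)^2-|z|^2|^2}>0$. -/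
set_option maxHeartbeats 1000000

/-- Lemma 3 of Götze–Tikhomirov, "On the Circular Law".
Fix `z ∈ ℂ` and `α = u + iv` with `v > 0`. Suppose `S = S(α,z)` satisfies
`S = -(α+S)/((α+S)² - |z|²)` and `Im S > 0`. Then
`1 - |S|² - |z|²|S|²/|α+S|² ≥ v/(v+1)`; in particular `|S| ≤ 1` and
`1 - (|α+S|² + |z|²)/|(α+S)² - |z|²|² > 0`. -/
theorem stmt_4 (z α S : ℂ) (hv : 0 < α.im) (hS : 0 < S.im)
    (heq : S = -((α + S) / ((α + S) ^ 2 - ((‖z‖ : ℂ)) ^ 2))) :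
    α.im / (α.im + 1) ≤ 1 - ‖S‖ ^ 2 - ‖z‖ ^ 2 * ‖S‖ ^ 2 / ‖α + S‖ ^ 2 ∧
    ‖S‖ ≤ 1 ∧
    0 < 1 - (‖α + S‖ ^ 2 + ‖z‖ ^ 2) / ‖(α + S) ^ 2 - ((‖z‖ : ℂ)) ^ 2‖ ^ 2 := by
  set w : ℂ := α + S with hwdef
  set b : ℂ := w ^ 2 - ((‖z‖ : ℂ)) ^ 2 with hbdef
  have hb : b ≠ 0 := by
    intro h
    rw [h] at heq
    simp at heq
    rw [heq] at hS
    simp at hS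
  have hbn : (0:ℝ) < ‖b‖ := norm_pos_iff.mpr hb
  have hD0 : 0 < ‖b‖ ^ 2 := by positivity
  have hR0 : (0:ℝ) ≤ ‖z‖ ^ 2 := by positivity
  have hwim : w.im = α.im + S.im := by simp [hwdef]
  have hb2 : ‖b‖ ^ 2 = b.re ^ 2 + b.im ^ 2 := by
    rw [Complex.sq_norm, Complex.normSq_apply]; ring
  have hw2 : ‖w‖ ^ 2 = w.re ^ 2 + w.im ^ 2 := by
    rw [Complex.sq_norm, Complex.normSq_apply]; ring
  have hbre : b.re = w.re ^ 2 - w.im ^ 2 - ‖z‖ ^ 2 := by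
    simp [hbdef, pow_two, Complex.mul_re]
  have hbim : b.im = 2 * w.re * w.im := by
    simp [hbdef, pow_two, Complex.mul_im]
    ring
  have h1 : S * b = -w := by
    rw [heq]; field_simp
  have hre := congrArg Complex.re h1
  have him := congrArg Complex.im h1
  rw [Complex.mul_re, Complex.neg_re] at hre
  rw [Complex.mul_im, Complex.neg_im] at him
  have hIm : S.im * ‖b‖ ^ 2 = (‖w‖ ^ 2 + ‖z‖ ^ 2) * w.im := by
    rw [hb2, hw2, hbre, hbim] at *
    linear_combination (-(2 * w.re * w.im)) * hre + (w.re ^ 2 - w.im ^ 2 - ‖z‖ ^ 2) * him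
  have hn : ‖S‖ * ‖b‖ = ‖w‖ := by
    rw [heq, norm_neg, norm_div]
    exact div_mul_cancel₀ _ (ne_of_gt hbn)
  have hSb : ‖S‖ ^ 2 * ‖b‖ ^ 2 = ‖w‖ ^ 2 := by
    rw [← hn]; ring
  have hW0 : 0 < ‖w‖ ^ 2 := by
    have : w ≠ 0 := by
      intro h
      rw [h] at heq
      simp at heq
      rw [heq] at hS
      simp at hS
    have := norm_pos_iff.mpr this
    positivity
  have hsle : S.im ≤ ‖S‖ := by
    calc S.im ≤ |S.im| := le_abs_self _
    _ ≤ ‖S‖ := Complex.abs_im_le_norm S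
    _ = ‖S‖ := rfl
  have hS0 : 0 < ‖S‖ := lt_of_lt_of_le hS hsle
  have key : S.im * ‖b‖ ^ 2 = (‖w‖ ^ 2 + ‖z‖ ^ 2) * (α.im + S.im) := by
    rw [hIm, hwim]
  have h5' : (S.im - ‖S‖ ^ 2 * (α.im + S.im)) * ‖b‖ ^ 2 = ‖z‖ ^ 2 * (α.im + S.im) := by
    linear_combination key - (α.im + S.im) * hSb
  have h5 : ‖S‖ ^ 2 * (α.im + S.im) ≤ S.im := by
    nlinarith [h5', hD0, mul_nonneg hR0 (by linarith : (0:ℝ) ≤ α.im + S.im)]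
  have hm1 : ‖S‖ ≤ 1 := by
    by_contra hcon
    push_neg at hcon
    have hsq : (1:ℝ) < ‖S‖ ^ 2 := by nlinarith
    nlinarith [h5, hsle, hS, hv, mul_pos (mul_pos hS0 hS0) hv,
      mul_pos hS (show (0:ℝ) < ‖S‖ ^ 2 - 1 by linarith)]
  have hs1 : S.im ≤ 1 := le_trans hsle hm1
  have hND : ‖w‖ ^ 2 + ‖z‖ ^ 2 < ‖b‖ ^ 2 := by
    nlinarith [key, hS, hv, hW0, hR0]
  refine ⟨?_, hm1, ?_⟩
  · have e1 : ‖S‖ ^ 2 = ‖w‖ ^ 2 / ‖b‖ ^ 2 := by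
      rw [eq_div_iff (ne_of_gt hD0)]; exact hSb
    have e2 : ‖z‖ ^ 2 * ‖S‖ ^ 2 / ‖w‖ ^ 2 = ‖z‖ ^ 2 / ‖b‖ ^ 2 := by
      rw [div_eq_div_iff (ne_of_gt hW0) (ne_of_gt hD0)]
      linear_combination ‖z‖ ^ 2 * hSb
    rw [e2, e1]
    rw [div_le_iff₀ (by linarith : (0:ℝ) < α.im + 1)]
    have hsum : 1 - ‖w‖ ^ 2 / ‖b‖ ^ 2 - ‖z‖ ^ 2 / ‖b‖ ^ 2
        = (‖b‖ ^ 2 - ‖w‖ ^ 2 - ‖z‖ ^ 2) / ‖b‖ ^ 2 := by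
      rw [sub_div, sub_div, div_self (ne_of_gt hD0)]
    rw [hsum, div_mul_eq_mul_div, le_div_iff₀ hD0]
    nlinarith [key, hs1, hND, hv, hS,
      mul_nonneg (by linarith : (0:ℝ) ≤ 1 - S.im)
        (by linarith : (0:ℝ) ≤ ‖b‖ ^ 2 - (‖w‖ ^ 2 + ‖z‖ ^ 2))]
  · have : (‖w‖ ^ 2 + ‖z‖ ^ 2) / ‖b‖ ^ 2 < 1 := by
      rw [div_lt_one hD0]; exact hND
    linarith
end

section
/- Let $\bold R=(\bold W-\alpha\bold I_{2n})^{-1}$ be the resolvent of the Hermitian block matrix $\bold W=\begin{pmatrix}0&\mathbf{X}(z)\\\mathbf{X}(z)^*&0\end{pmatrix}$ built from $\mathbf{X}(z)=\frac1{\sqrt n}(X_{jk})-z\mathbf{I}$, $\alpha=u+iv$, $v>0$, and let $\bold R^{(jk)}$ denote the resolvent of the matrix with entries $X_{jk}$ and $\overline X_{jk}$ replaced by 0, with remainder $\bold T^{(jk)}$ in the second-order resolvent expansion $\bold R=\bold R^{(jk)}-\frac{X_{jk}}{\sqrt n}\bold R^{(jk)}\bold e_j\bold e_{k+n}^T\bold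 R^{(jk)}-\frac{\overline X_{jk}}{\sqrt n}\bold R^{(jk)}\bold e_{k+n}\bold e_j^T\bold R^{(jk)}+\bold T^{(jk)}$. Let $\varkappa_3=\max_{j,k}\mathbf{E}|X_{jk}|^3<\infty$. Then $\frac1{n\sqrt n}\sum_{j,k=1}^n\mathbf{E}|X_{jk}|\big(|T^{(jk)}_{k+n,j}|+|T^{(jk)}_{j,k+n}|\big)\le\frac{C\varkappa_3}{\sqrt n\,v^3}$ for an absolute constant $C$. -/
open MeasureTheory ProbabilityTheory Matrix
open scoped ENNReal

/-- The shifted matrix `𝐗(z) = n^{-1/2}(X_{jk}) - z𝐈` built from an entry matrix `Y`. -/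
noncomputable def shiftedMat (n : ℕ) (z : ℂ) (Y : Matrix (Fin n) (Fin n) ℂ) :
    Matrix (Fin n) (Fin n) ℂ :=
  Matrix.of fun j k => ((Real.sqrt n : ℂ))⁻¹ * Y j k - if j = k then z else 0

/-- The Hermitian `2n × 2n` block matrix `𝐖 = [[0, 𝐗(z)], [𝐗(z)ᴴ, 0]]`. -/
noncomputable def blockW (n : ℕ) (z : ℂ) (Y : Matrix (Fin n) (Fin n) ℂ) :
    Matrix (Fin n ⊕ Fin n) (Fin n ⊕ Fin n) ℂ :=
  Matrix.fromBlocks 0 (shiftedMat n z Y) (shiftedMat n z Y)ᴴ 0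

/-- The resolvent `𝐑(α,z) = (𝐖 - α𝐈₂ₙ)⁻¹`. -/
noncomputable def resolv (n : ℕ) (z α : ℂ) (Y : Matrix (Fin n) (Fin n) ℂ) :
    Matrix (Fin n ⊕ Fin n) (Fin n ⊕ Fin n) ℂ :=
  (blockW n z Y - α • 1)⁻¹

/-- The entry matrix with the `(j,k)` entry replaced by `0`. -/
def zeroOut {n : ℕ} (j k : Fin n) (Y : Matrix (Fin n) (Fin n) ℂ) :
    Matrix (Fin n) (Fin n) ℂ :=
  Matrix.of fun a b => if a = j ∧ b = k then 0 else Y a b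

/-- The remainder `𝐓^{(jk)}` in the second-order resolvent expansion
`𝐑 = 𝐑^{(jk)} - n^{-1/2}X_{jk}𝐑^{(jk)}e_je_{k+n}ᵀ𝐑^{(jk)}
      - n^{-1/2}X̄_{jk}𝐑^{(jk)}e_{k+n}e_jᵀ𝐑^{(jk)} + 𝐓^{(jk)}`. -/
noncomputable def Trem (n : ℕ) (z α : ℂ) (Y : Matrix (Fin n) (Fin n) ℂ) (j k : Fin n) :
    Matrix (Fin n ⊕ Fin n) (Fin n ⊕ Fin n) ℂ :=
  resolv n z α Y - resolv n z α (zeroOut j k Y)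
    + (Y j k / ((Real.sqrt n : ℂ))) •
        (resolv n z α (zeroOut j k Y) * Matrix.single (Sum.inl j) (Sum.inr k) 1 *
          resolv n z α (zeroOut j k Y))
    + ((starRingEnd ℂ) (Y j k) / ((Real.sqrt n : ℂ))) •
        (resolv n z α (zeroOut j k Y) * Matrix.single (Sum.inr k) (Sum.inl j) 1 *
          resolv n z α (zeroOut j k Y))


open Matrix

section aux
variable {m : Type*} [Fintype m] [DecidableEq m]

omit [DecidableEq m] in
lemma herm_dot_im {H : Matrix m m ℂ} (hH : H.IsHermitian) (x : m → ℂ) :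
    (star x ⬝ᵥ (H *ᵥ x)).im = 0 := by
  have h : (starRingEnd ℂ) (star x ⬝ᵥ (H *ᵥ x)) = star x ⬝ᵥ (H *ᵥ x) := by
    have : star (star x ⬝ᵥ (H *ᵥ x)) = star x ⬝ᵥ (H *ᵥ x) := by
      conv_lhs => rw [star_dotProduct, star_star, star_mulVec, hH.eq, ← dotProduct_mulVec]
    exact this
  exact Complex.conj_eq_iff_im.mp h

lemma res_dot_im {H : Matrix m m ℂ} (hH : H.IsHermitian) (α : ℂ) (x : m → ℂ) :
    (star x ⬝ᵥ ((H - α • 1) *ᵥ x)).im = -(α.im * ∑ i, ‖x i‖ ^ 2) := by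
  have hxx : star x ⬝ᵥ x = ((∑ i, ‖x i‖ ^ 2 : ℝ) : ℂ) := by
    simp only [dotProduct, Pi.star_apply, Complex.star_def]
    push_cast
    congr 1
    ext i
    rw [← Complex.normSq_eq_conj_mul_self, Complex.normSq_eq_norm_sq]
    push_cast; ring
  rw [sub_mulVec, dotProduct_sub, Complex.sub_im, herm_dot_im hH, smul_mulVec,
    one_mulVec, dotProduct_smul, smul_eq_mul, hxx, Complex.mul_im, Complex.ofReal_re,
    Complex.ofReal_im]
  ring

lemma herm_det_isUnit {H : Matrix m m ℂ} (hH : H.IsHermitian) {α : ℂ} (hα : 0 < α.im) :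
    IsUnit (H - α • 1).det := by
  rw [isUnit_iff_ne_zero]
  intro hdet
  obtain ⟨x, hx, hMx⟩ := (Matrix.exists_mulVec_eq_zero_iff).mpr hdet
  have h0 := res_dot_im hH α x
  rw [hMx] at h0
  simp only [dotProduct_zero, Complex.zero_im, neg_eq_zero] at h0
  have hS : ∑ i, ‖x i‖ ^ 2 = 0 := (mul_eq_zero.mp (neg_eq_zero.mp h0.symm)).resolve_left hα.ne'
  apply hx
  funext i
  have := (Finset.sum_eq_zero_iff_of_nonneg (fun i _ => sq_nonneg ‖x i‖)).mp hS i
    (Finset.mem_univ i)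
  simpa using this

lemma herm_resolvent_entry {H : Matrix m m ℂ} (hH : H.IsHermitian) {α : ℂ} (hα : 0 < α.im)
    (a b : m) : ‖(H - α • 1)⁻¹ a b‖ ≤ 1 / α.im := by
  set M := H - α • 1 with hM
  have hdet : IsUnit M.det := herm_det_isUnit hH hα
  set x : m → ℂ := M⁻¹ *ᵥ Pi.single b 1 with hxdef
  have hMx : M *ᵥ x = Pi.single b 1 := by
    rw [hxdef, mulVec_mulVec, Matrix.mul_nonsing_inv M hdet, one_mulVec]
  have him := res_dot_im hH α x
  rw [hM.symm, hMx, dotProduct_single, mul_one] at him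
  have hstar : ((star x) b).im = -(x b).im := by simp
  have hkey : α.im * ∑ i, ‖x i‖ ^ 2 = (x b).im := by rw [hstar] at him; linarith
  set S := ∑ i, ‖x i‖ ^ 2 with hSdef
  have hS0 : 0 ≤ S := Finset.sum_nonneg fun i _ => sq_nonneg _
  have h1 : α.im * S ≤ ‖x b‖ := by
    rw [hkey]
    exact le_trans (le_abs_self _) (Complex.abs_im_le_norm _)
  have hterm : ∀ i, ‖x i‖ ^ 2 ≤ S :=
    fun i => Finset.single_le_sum (fun i _ => sq_nonneg ‖x i‖) (Finset.mem_univ i)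
  have hxa : ‖x a‖ ^ 2 ≤ S := hterm a
  have hxb : ‖x b‖ ^ 2 ≤ S := hterm b
  have hxab : x a = M⁻¹ a b := by
    rw [hxdef, mulVec_single]; simp
  rw [← hxab]
  by_cases hb : ‖x b‖ = 0
  · have hS : S = 0 := le_antisymm (by nlinarith) hS0
    have h2 : ‖x a‖ ^ 2 ≤ 0 := hS ▸ hxa
    have h3 : ‖x a‖ = 0 := by nlinarith [norm_nonneg (x a)]
    rw [h3]; positivity
  · have hbpos : 0 < ‖x b‖ := lt_of_le_of_ne (norm_nonneg _) (Ne.symm hb)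
    have hxb1 : ‖x b‖ ≤ 1 / α.im := by
      rw [le_div_iff₀ hα]
      nlinarith
    have hS1 : S ≤ 1 / α.im ^ 2 := by
      have h4 : α.im * S * α.im ≤ 1 := by
        have := le_trans h1 hxb1
        rw [le_div_iff₀ hα] at this
        linarith
      rw [le_div_iff₀ (pow_pos hα 2)]
      nlinarith
    have h5 : ‖x a‖ ^ 2 ≤ (1 / α.im) ^ 2 := by
      rw [div_pow, one_pow]; exact le_trans hxa hS1
    have h6 := Real.sqrt_le_sqrt h5
    rwa [Real.sqrt_sq (norm_nonneg _), Real.sqrt_sq (le_of_lt (one_div_pos.mpr hα))] at h6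

lemma mul_std_mul_apply (A B : Matrix m m ℂ) (p q a b : m) :
    (A * single p q (1 : ℂ) * B) a b = A a p * B q b := by
  rw [Matrix.mul_assoc, Matrix.mul_apply]
  rw [Finset.sum_eq_single p]
  · rw [single_mul_apply_same, one_mul]
  · intro c _ hc
    simp [hc]
  · intro h; exact absurd (Finset.mem_univ p) h

end aux

section alg
variable {m : Type*} [Fintype m] [DecidableEq m]

lemma second_order (M M' : Matrix m m ℂ) (h : IsUnit M.det) (h' : IsUnit M'.det) :
    M⁻¹ - M'⁻¹ + M'⁻¹ * (M - M') * M'⁻¹ =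
      M'⁻¹ * (M - M') * (M'⁻¹ * (M - M') * M⁻¹) := by
  have h1 : M * M⁻¹ = 1 := Matrix.mul_nonsing_inv M h
  have h2 : M'⁻¹ * M' = 1 := Matrix.nonsing_inv_mul M' h'
  have key : M'⁻¹ - M⁻¹ = M'⁻¹ * (M - M') * M⁻¹ := by
    calc M'⁻¹ - M⁻¹ = M'⁻¹ * (M * M⁻¹) - (M'⁻¹ * M') * M⁻¹ := by
          rw [h1, h2, mul_one, one_mul]
    _ = M'⁻¹ * (M - M') * M⁻¹ := by noncomm_ring
  calc M⁻¹ - M'⁻¹ + M'⁻¹ * (M - M') * M'⁻¹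
      = M'⁻¹ * (M - M') * M'⁻¹ - (M'⁻¹ - M⁻¹) := by noncomm_ring
    _ = M'⁻¹ * (M - M') * M'⁻¹ - M'⁻¹ * (M - M') * M⁻¹ := by rw [key]
    _ = M'⁻¹ * (M - M') * (M'⁻¹ - M⁻¹) := by noncomm_ring
    _ = M'⁻¹ * (M - M') * (M'⁻¹ * (M - M') * M⁻¹) := by rw [key]

lemma quad_entry (A B : Matrix m m ℂ) (a b : ℂ) (p q x y : m) :
    (A * (a • single p q (1 : ℂ) + b • single q p (1 : ℂ)) * B) x y
      = a * (A x p * B q y) + b * (A x q * B p y) := by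
  simp only [mul_add, add_mul, Matrix.mul_smul, Matrix.smul_mul, Matrix.add_apply,
    Matrix.smul_apply, mul_std_mul_apply, smul_eq_mul]

end alg

lemma blockW_herm (n : ℕ) (z : ℂ) (Y : Matrix (Fin n) (Fin n) ℂ) :
    (blockW n z Y).IsHermitian := by
  show _ᴴ = _
  rw [blockW, fromBlocks_conjTranspose]
  simp [blockW]

lemma shiftedMat_diff (n : ℕ) (z : ℂ) (Y : Matrix (Fin n) (Fin n) ℂ) (j k p q : Fin n) :
    shiftedMat n z Y p q - shiftedMat n z (zeroOut j k Y) p q =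
      if p = j ∧ q = k then ((Real.sqrt n : ℂ))⁻¹ * Y j k else 0 := by
  simp only [shiftedMat, zeroOut, Matrix.of_apply]
  rw [show ∀ (c d e : ℂ), (c - e) - (d - e) = c - d from fun c d e => by ring]
  by_cases h : p = j ∧ q = k
  · obtain ⟨rfl, rfl⟩ := h
    rw [if_pos ⟨rfl, rfl⟩, if_pos ⟨rfl, rfl⟩]
    ring
  · rw [if_neg h, if_neg h]
    ring

lemma blockV (n : ℕ) (z : ℂ) (Y : Matrix (Fin n) (Fin n) ℂ) (j k : Fin n) :
    blockW n z Y - blockW n z (zeroOut j k Y) =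
      (Y j k / ((Real.sqrt n : ℂ))) •
          single (Sum.inl j : Fin n ⊕ Fin n) (Sum.inr k) (1 : ℂ)
        + ((starRingEnd ℂ) (Y j k) / ((Real.sqrt n : ℂ))) •
          single (Sum.inr k : Fin n ⊕ Fin n) (Sum.inl j) (1 : ℂ) := by
  ext a b
  rcases a with a | a <;> rcases b with b | b
  · simp [blockW, single]
  · have h1 := shiftedMat_diff n z Y j k a b
    simp only [blockW, Matrix.sub_apply, Matrix.fromBlocks_apply₁₂, Matrix.add_apply,
      Matrix.smul_apply, single, Matrix.of_apply, smul_eq_mul] at h1 ⊢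
    rw [h1]
    by_cases h : a = j ∧ b = k
    · obtain ⟨rfl, rfl⟩ := h
      simp
      ring
    · have h' : ¬((Sum.inl j : Fin n ⊕ Fin n) = (Sum.inl a : Fin n ⊕ Fin n) ∧ (Sum.inr k : Fin n ⊕ Fin n) = (Sum.inr b : Fin n ⊕ Fin n)) := by
        simp only [Sum.inl.injEq, Sum.inr.injEq]
        tauto
      rw [if_neg h, if_neg h']
      simp
  · have h1 := shiftedMat_diff n z Y j k b a
    simp only [blockW, Matrix.sub_apply, Matrix.fromBlocks_apply₂₁, Matrix.add_apply,
      Matrix.smul_apply, single, Matrix.of_apply, Matrix.conjTranspose_apply,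
      smul_eq_mul]
    rw [show ∀ u w : ℂ, star u - star w = (starRingEnd ℂ) (u - w) from fun u w => by simp, h1]
    by_cases h : b = j ∧ a = k
    · obtain ⟨rfl, rfl⟩ := h
      simp [Complex.conj_ofReal]
      ring
    · have h' : ¬((Sum.inr k : Fin n ⊕ Fin n) = (Sum.inr a : Fin n ⊕ Fin n) ∧ (Sum.inl j : Fin n ⊕ Fin n) = (Sum.inl b : Fin n ⊕ Fin n)) := by
        simp only [Sum.inl.injEq, Sum.inr.injEq]
        tauto
      rw [if_neg h, if_neg h']
      simp
  · simp [blockW, single]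

lemma norm_coef_mul {c u w : ℂ} {t s : ℝ} (hu : ‖u‖ ≤ t) (hw : ‖w‖ ≤ s) (ht : 0 ≤ t)
    (hs : 0 ≤ s) : ‖c * (u * w)‖ ≤ ‖c‖ * (t * s) := by
  rw [norm_mul, norm_mul]
  exact mul_le_mul_of_nonneg_left (mul_le_mul hu hw (norm_nonneg _) ht) (norm_nonneg _)

lemma Trem_entry_bound (n : ℕ) (z α : ℂ) (hα : 0 < α.im)
    (Y : Matrix (Fin n) (Fin n) ℂ) (j k : Fin n) (x y : Fin n ⊕ Fin n) :
    ‖Trem n z α Y j k x y‖ ≤ 4 * ‖Y j k‖ ^ 2 / (n * α.im ^ 3) := by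
  have hn : 0 < n := j.pos
  set M := blockW n z Y - α • 1 with hMdef
  set M' := blockW n z (zeroOut j k Y) - α • 1 with hM'def
  have hdet : IsUnit M.det := herm_det_isUnit (blockW_herm n z Y) hα
  have hdet' : IsUnit M'.det := herm_det_isUnit (blockW_herm n z (zeroOut j k Y)) hα
  have hR : ∀ p q, ‖M⁻¹ p q‖ ≤ 1 / α.im :=
    fun p q => herm_resolvent_entry (blockW_herm n z Y) hα p q
  have hR' : ∀ p q, ‖M'⁻¹ p q‖ ≤ 1 / α.im :=
    fun p q => herm_resolvent_entry (blockW_herm n z (zeroOut j k Y)) hα p q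
  set a := Y j k / ((Real.sqrt n : ℂ)) with ha
  set b := (starRingEnd ℂ) (Y j k) / ((Real.sqrt n : ℂ)) with hb
  have hba : ‖b‖ = ‖a‖ := by rw [ha, hb, norm_div, norm_div, RCLike.norm_conj]
  have hMM' : M - M' =
      a • single (Sum.inl j : Fin n ⊕ Fin n) (Sum.inr k) (1 : ℂ)
        + b • single (Sum.inr k : Fin n ⊕ Fin n) (Sum.inl j) (1 : ℂ) := by
    rw [hMdef, hM'def, sub_sub_sub_cancel_right, blockV]
  have hres : resolv n z α Y = M⁻¹ := rfl
  have hres' : resolv n z α (zeroOut j k Y) = M'⁻¹ := rfl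
  have hT : Trem n z α Y j k = M'⁻¹ * (M - M') * (M'⁻¹ * (M - M') * M⁻¹) := by
    rw [← second_order M M' hdet hdet']
    unfold Trem
    rw [hres, hres', hMM', mul_add, add_mul, Matrix.mul_smul, Matrix.mul_smul,
      Matrix.smul_mul, Matrix.smul_mul, add_assoc]
  have hv : (0 : ℝ) ≤ 1 / α.im := le_of_lt (one_div_pos.mpr hα)
  have ha0 : (0 : ℝ) ≤ ‖a‖ := norm_nonneg a
  -- inner matrix bound
  set S := M'⁻¹ * (M - M') * M⁻¹ with hSdef
  have hS : ∀ u w, ‖S u w‖ ≤ 2 * ‖a‖ * (1 / α.im * (1 / α.im)) := by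
    intro u w
    rw [hSdef, hMM', quad_entry]
    calc ‖a * (M'⁻¹ u (Sum.inl j) * M⁻¹ (Sum.inr k) w)
          + b * (M'⁻¹ u (Sum.inr k) * M⁻¹ (Sum.inl j) w)‖
        ≤ ‖a * (M'⁻¹ u (Sum.inl j) * M⁻¹ (Sum.inr k) w)‖
          + ‖b * (M'⁻¹ u (Sum.inr k) * M⁻¹ (Sum.inl j) w)‖ := norm_add_le _ _
      _ ≤ ‖a‖ * (1 / α.im * (1 / α.im)) + ‖b‖ * (1 / α.im * (1 / α.im)) :=
          add_le_add (norm_coef_mul (hR' _ _) (hR _ _) hv hv)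
            (norm_coef_mul (hR' _ _) (hR _ _) hv hv)
      _ = 2 * ‖a‖ * (1 / α.im * (1 / α.im)) := by rw [hba]; ring
  have hSnn : (0 : ℝ) ≤ 2 * ‖a‖ * (1 / α.im * (1 / α.im)) := by positivity
  have hmain : ‖Trem n z α Y j k x y‖ ≤
      2 * (‖a‖ * (1 / α.im * (2 * ‖a‖ * (1 / α.im * (1 / α.im))))) := by
    rw [hT, hMM', quad_entry]
    calc ‖a * (M'⁻¹ x (Sum.inl j) * S (Sum.inr k) y)
          + b * (M'⁻¹ x (Sum.inr k) * S (Sum.inl j) y)‖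
        ≤ ‖a * (M'⁻¹ x (Sum.inl j) * S (Sum.inr k) y)‖
          + ‖b * (M'⁻¹ x (Sum.inr k) * S (Sum.inl j) y)‖ := norm_add_le _ _
      _ ≤ ‖a‖ * (1 / α.im * (2 * ‖a‖ * (1 / α.im * (1 / α.im))))
          + ‖b‖ * (1 / α.im * (2 * ‖a‖ * (1 / α.im * (1 / α.im)))) :=
          add_le_add (norm_coef_mul (hR' _ _) (hS _ _) hv hSnn)
            (norm_coef_mul (hR' _ _) (hS _ _) hv hSnn)
      _ = 2 * (‖a‖ * (1 / α.im * (2 * ‖a‖ * (1 / α.im * (1 / α.im))))) := by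
          rw [hba]; ring
  refine le_trans hmain (le_of_eq ?_)
  have hna : ‖a‖ = ‖Y j k‖ / Real.sqrt n := by
    rw [ha, norm_div, Complex.norm_real, Real.norm_eq_abs, abs_of_nonneg (Real.sqrt_nonneg _)]
  have hs : Real.sqrt n * Real.sqrt n = (n : ℝ) := Real.mul_self_sqrt (Nat.cast_nonneg n)
  have hspos : 0 < Real.sqrt n := Real.sqrt_pos.mpr (by exact_mod_cast hn)
  rw [hna]
  have hvne : α.im ≠ 0 := hα.ne'
  conv_rhs => rw [← hs]
  field_simp
  linear_combination

/-- Lemma `ap` in the Appendix of Götze–Tikhomirov, "On the Circular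
Law".  With `κ₃ = max_{j,k} 𝐄|X_{jk}|³ < ∞`,
`(n√n)⁻¹ ∑_{j,k} 𝐄 |X_{jk}| (|T^{(jk)}_{k+n,j}| + |T^{(jk)}_{j,k+n}|) ≤ Cκ₃/(√n v³)`
for an absolute constant `C`, where `v = Im α > 0`. -/
theorem stmt_15 :
    ∃ C > (0 : ℝ),
      ∀ (Ω : Type) (_ : MeasureSpace Ω) (_ : IsProbabilityMeasure (ℙ : Measure Ω))
        (n : ℕ), 0 < n →
      ∀ X : Fin n → Fin n → Ω → ℂ,
      (∀ j k, Measurable (X j k)) →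
      ∀ z α : ℂ, 0 < α.im →
      ∀ κ3 : ℝ,
      (∀ j k, Integrable (fun ω => ‖X j k ω‖ ^ 3) ℙ) →
      (∀ j k, ∫ ω, ‖X j k ω‖ ^ 3 ≤ κ3) →
      (1 / ((n : ℝ) * Real.sqrt n)) * ∑ j : Fin n, ∑ k : Fin n,
          ∫ ω, ‖X j k ω‖ *
            (‖Trem n z α (Matrix.of fun a b => X a b ω) j k (Sum.inr k) (Sum.inl j)‖ +
             ‖Trem n z α (Matrix.of fun a b => X a b ω) j k (Sum.inl j) (Sum.inr k)‖)
        ≤ C * κ3 / (Real.sqrt n * α.im ^ 3) := by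
  refine ⟨8, by norm_num, ?_⟩
  intro Ω _ _ n hn X hX z α hα κ3 hint hmom
  have hn0 : (0 : ℝ) < n := by exact_mod_cast hn
  have hjk : ∀ j k : Fin n,
      (∫ ω, ‖X j k ω‖ *
          (‖Trem n z α (Matrix.of fun a b => X a b ω) j k (Sum.inr k) (Sum.inl j)‖ +
           ‖Trem n z α (Matrix.of fun a b => X a b ω) j k (Sum.inl j) (Sum.inr k)‖))
        ≤ 8 * κ3 / (n * α.im ^ 3) := by
    intro j k
    have hg : Integrable (fun ω => 8 / ((n : ℝ) * α.im ^ 3) * ‖X j k ω‖ ^ 3) ℙ :=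
      (hint j k).const_mul _
    have hle : ∀ ω, ‖X j k ω‖ *
        (‖Trem n z α (Matrix.of fun a b => X a b ω) j k (Sum.inr k) (Sum.inl j)‖ +
         ‖Trem n z α (Matrix.of fun a b => X a b ω) j k (Sum.inl j) (Sum.inr k)‖)
        ≤ 8 / ((n : ℝ) * α.im ^ 3) * ‖X j k ω‖ ^ 3 := by
      intro ω
      have h1 := Trem_entry_bound n z α hα (Matrix.of fun a b => X a b ω) j k
        (Sum.inr k) (Sum.inl j)
      have h2 := Trem_entry_bound n z α hα (Matrix.of fun a b => X a b ω) j k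
        (Sum.inl j) (Sum.inr k)
      have hY : (Matrix.of fun a b => X a b ω) j k = X j k ω := rfl
      rw [hY] at h1 h2
      have hx0 : (0 : ℝ) ≤ ‖X j k ω‖ := norm_nonneg _
      calc ‖X j k ω‖ *
          (‖Trem n z α (Matrix.of fun a b => X a b ω) j k (Sum.inr k) (Sum.inl j)‖ +
           ‖Trem n z α (Matrix.of fun a b => X a b ω) j k (Sum.inl j) (Sum.inr k)‖)
          ≤ ‖X j k ω‖ * (4 * ‖X j k ω‖ ^ 2 / (n * α.im ^ 3)
              + 4 * ‖X j k ω‖ ^ 2 / (n * α.im ^ 3)) :=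
            mul_le_mul_of_nonneg_left (add_le_add h1 h2) hx0
        _ = 8 / ((n : ℝ) * α.im ^ 3) * ‖X j k ω‖ ^ 3 := by
            field_simp
            ring
    calc (∫ ω, ‖X j k ω‖ *
          (‖Trem n z α (Matrix.of fun a b => X a b ω) j k (Sum.inr k) (Sum.inl j)‖ +
           ‖Trem n z α (Matrix.of fun a b => X a b ω) j k (Sum.inl j) (Sum.inr k)‖))
        ≤ ∫ ω, 8 / ((n : ℝ) * α.im ^ 3) * ‖X j k ω‖ ^ 3 :=
          integral_mono_of_nonneg (Filter.Eventually.of_forall fun ω => by positivity) hg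
            (Filter.Eventually.of_forall hle)
      _ = 8 / ((n : ℝ) * α.im ^ 3) * ∫ ω, ‖X j k ω‖ ^ 3 := integral_const_mul _ _
      _ ≤ 8 / ((n : ℝ) * α.im ^ 3) * κ3 := by
          have : (0 : ℝ) ≤ 8 / ((n : ℝ) * α.im ^ 3) := by positivity
          exact mul_le_mul_of_nonneg_left (hmom j k) this
      _ = 8 * κ3 / (n * α.im ^ 3) := by ring
  have hsum : (∑ j : Fin n, ∑ k : Fin n,
      ∫ ω, ‖X j k ω‖ *
          (‖Trem n z α (Matrix.of fun a b => X a b ω) j k (Sum.inr k) (Sum.inl j)‖ +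
           ‖Trem n z α (Matrix.of fun a b => X a b ω) j k (Sum.inl j) (Sum.inr k)‖))
      ≤ (n : ℝ) ^ 2 * (8 * κ3 / (n * α.im ^ 3)) := by
    calc (∑ j : Fin n, ∑ k : Fin n,
        ∫ ω, ‖X j k ω‖ *
            (‖Trem n z α (Matrix.of fun a b => X a b ω) j k (Sum.inr k) (Sum.inl j)‖ +
             ‖Trem n z α (Matrix.of fun a b => X a b ω) j k (Sum.inl j) (Sum.inr k)‖))
        ≤ ∑ _j : Fin n, ∑ _k : Fin n, 8 * κ3 / (n * α.im ^ 3) :=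
          Finset.sum_le_sum fun j _ => Finset.sum_le_sum fun k _ => hjk j k
      _ = (n : ℝ) ^ 2 * (8 * κ3 / (n * α.im ^ 3)) := by
          simp [Finset.sum_const]
          ring
  have hpos : (0 : ℝ) ≤ 1 / ((n : ℝ) * Real.sqrt n) := by positivity
  refine le_trans (mul_le_mul_of_nonneg_left hsum hpos) (le_of_eq ?_)
  have hspos : 0 < Real.sqrt n := Real.sqrt_pos.mpr hn0
  have hvne : α.im ≠ 0 := hα.ne'
  field_simp
end
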